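/- arXiv:0810.4271 — 3 statements merged into one kernel-verified Lean document; each statement's English description precedes it below -/
import Mathlib

section
/- (Main Proposition) A time-changed Brownian market S_t = S_0·exp(μT_t + W(T_t)), where T is an independent subordinator with Lévy measure ρ ≠ 0, is symmetric—i.e., its Lévy density ν satisfies ν(x) = e^{−x}ν(−x) for all x—if and only if μ = −1/2. -/
open MeasureTheory Real

/-! Completing the square, `e^{-(x-μy)²/(2y)} = e^{μx} e^{-x²/(2y) - μ²y/2}`, writes the Lévy density
as `ν(x) = e^{μx} f(x)` with `f` even. Then `ν(x) = e^{-x} ν(-x)` says `e^{μx} f(x) = e^{-(1+μ)x} f(x)`,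
which holds for all `x` when `μ = -1/2`, and at a single `x ≠ 0` with `f(x) ≠ 0` (positivity of `ν`
gives `x = 1`) already forces `(2μ + 1) x = 0`. -/

/-- The even factor `f` in `ν(x) = e^{μx} f(x)`. -/
noncomputable def gaussianMixtureEvenPart (μ : ℝ) (ρ : Measure (Set.Ioi (0 : ℝ))) (x : ℝ) : ℝ :=
  ∫ y : Set.Ioi (0 : ℝ),
    (1 / √(2 * π * (y : ℝ))) * exp (-(x ^ 2) / (2 * (y : ℝ)) - μ ^ 2 * (y : ℝ) / 2) ∂ρ

lemma gaussianMixtureEvenPart_neg (μ : ℝ) (ρ : Measure (Set.Ioi (0 : ℝ))) (x : ℝ) :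
    gaussianMixtureEvenPart μ ρ (-x) = gaussianMixtureEvenPart μ ρ x := by
  simp only [gaussianMixtureEvenPart, neg_sq]

lemma exp_neg_sq_sub_mul_div_eq {y : ℝ} (hy : y ≠ 0) (μ x : ℝ) :
    exp (-(x - μ * y) ^ 2 / (2 * y)) = exp (μ * x) * exp (-(x ^ 2) / (2 * y) - μ ^ 2 * y / 2) := by
  rw [← exp_add]
  congr 1
  field_simp
  ring

lemma integral_gaussian_mixture_eq_exp_mul (μ : ℝ) (ρ : Measure (Set.Ioi (0 : ℝ))) (x : ℝ) :
    ∫ y : Set.Ioi (0 : ℝ),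
        (1 / √(2 * π * (y : ℝ))) * exp (-(x - μ * (y : ℝ)) ^ 2 / (2 * (y : ℝ))) ∂ρ =
      exp (μ * x) * gaussianMixtureEvenPart μ ρ x := by
  rw [gaussianMixtureEvenPart, ← integral_const_mul]
  congr 1 with y
  rw [exp_neg_sq_sub_mul_div_eq y.2.ne' μ x]
  ring

lemma symmetric_iff_of_eq_exp_mul_even {ν f : ℝ → ℝ} {μ x₀ : ℝ}
    (hν : ∀ x, ν x = exp (μ * x) * f x) (hf_even : ∀ x, f (-x) = f x)
    (hx₀ : x₀ ≠ 0) (hfx₀ : f x₀ ≠ 0) :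
    (∀ x, ν x = exp (-x) * ν (-x)) ↔ μ = -1/2 := by
  have hsymm_at : ∀ x, ν x = exp (-x) * ν (-x) ↔ exp (μ * x) * f x = exp (-x - μ * x) * f x := by
    intro x
    rw [hν, hν, hf_even, ← mul_assoc, ← exp_add, mul_neg, ← sub_eq_add_neg]
  simp only [hsymm_at]
  constructor
  · intro h
    have hexp : μ * x₀ = -x₀ - μ * x₀ := exp_injective (mul_right_cancel₀ hfx₀ (h x₀))
    have hlinear : (2 * μ + 1) * x₀ = 0 := by linarith
    linarith [(mul_eq_zero.mp hlinear).resolve_right hx₀]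
  · rintro rfl x
    ring_nf

theorem time_changed_brownian_market_symmetric_iff_general
    (μ : ℝ) (ρ : Measure (Set.Ioi (0 : ℝ)))
    (ν : ℝ → ℝ)
    (hν : ∀ x : ℝ, ν x =
      ∫ y : Set.Ioi (0 : ℝ),
        (1 / Real.sqrt (2 * Real.pi * (y : ℝ))) *
          Real.exp (-(x - μ * (y : ℝ)) ^ 2 / (2 * (y : ℝ))) ∂ρ)
    (hν_pos : ∀ x : ℝ, 0 < ν x) :
    (∀ x : ℝ, ν x = Real.exp (-x) * ν (-x)) ↔ μ = -1/2 := by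
  have hν_eq : ∀ x, ν x = exp (μ * x) * gaussianMixtureEvenPart μ ρ x := fun x =>
    (hν x).trans (integral_gaussian_mixture_eq_exp_mul μ ρ x)
  have hf_one : gaussianMixtureEvenPart μ ρ 1 ≠ 0 := by
    intro h
    simpa [hν_eq, h] using hν_pos 1
  exact symmetric_iff_of_eq_exp_mul_even hν_eq (gaussianMixtureEvenPart_neg μ ρ) one_ne_zero hf_one

/-- Main Proposition: a time-changed Brownian market with drift μ, whose Lévy
density is ν(x) = ∫₀^∞ (2πy)^{-1/2} e^{-(x-μy)²/(2y)} ρ(dy) for a nonzero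
subordinator Lévy measure ρ (assumed to make ν finite and positive), is
symmetric — ν(x) = e^{-x} ν(-x) for all x — iff μ = -1/2. -/
theorem time_changed_brownian_market_symmetric_iff
    (μ : ℝ) (ρ : Measure (Set.Ioi (0 : ℝ))) (hρ : ρ ≠ 0)
    (ν : ℝ → ℝ)
    (hν : ∀ x : ℝ, ν x =
      ∫ y : Set.Ioi (0 : ℝ),
        (1 / Real.sqrt (2 * Real.pi * (y : ℝ))) *
          Real.exp (-(x - μ * (y : ℝ)) ^ 2 / (2 * (y : ℝ))) ∂ρ)
    (hν_pos : ∀ x : ℝ, 0 < ν x)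
    (hν_int : ∀ x : ℝ, Integrable (fun y : Set.Ioi (0 : ℝ) =>
        (1 / Real.sqrt (2 * Real.pi * (y : ℝ))) *
          Real.exp (-(x - μ * (y : ℝ)) ^ 2 / (2 * (y : ℝ)))) ρ) :
    (∀ x : ℝ, ν x = Real.exp (-x) * ν (-x)) ↔ μ = -1/2 :=
  time_changed_brownian_market_symmetric_iff_general μ ρ ν hν hν_pos
end

section
/- If ν is a Lévy measure on ℝ with density ν(x) satisfying ν(x)e^{−μx} = ν(−x)e^{μx} for all x ≠ 0 (the condition from the Cont–Tankov representation theorem for subordinated Brownian motion with drift μ), then ν satisfies the market symmetry condition ν(x) = e^{−x}ν(−x) for all x ≠ 0 if and only if either μ = −1/2 or ν ≡ 0. -/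
/-- If a Lévy density satisfies the Cont–Tankov condition
ν(x) e^{-μx} = ν(-x) e^{μx} (subordinated Brownian motion with drift μ), then
the market symmetry condition ν(x) = e^{-x} ν(-x) holds iff μ = -1/2 or ν ≡ 0. -/
theorem cont_tankov_symmetry_iff
    (μ : ℝ) (ν : ℝ → ℝ)
    (hCT : ∀ x : ℝ, x ≠ 0 → ν x * Real.exp (-μ * x) = ν (-x) * Real.exp (μ * x)) :
    (∀ x : ℝ, x ≠ 0 → ν x = Real.exp (-x) * ν (-x)) ↔
      (μ = -1/2 ∨ ∀ x : ℝ, x ≠ 0 → ν x = 0) := by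
  have key : ∀ x : ℝ, x ≠ 0 → ν x = ν (-x) * Real.exp (2 * μ * x) := by
    intro x hx
    have h := hCT x hx
    have h2 : ν x = ν (-x) * Real.exp (μ * x) / Real.exp (-μ * x) := by
      field_simp at h ⊢
      linarith [h]
    rw [h2, div_eq_iff (Real.exp_ne_zero _)]
    rw [mul_assoc, ← Real.exp_add]
    ring_nf
  constructor
  · intro hsym
    by_cases hμ : μ = -1/2
    · exact Or.inl hμ
    · refine Or.inr fun x hx => ?_
      have hnx : ν (-x) * (Real.exp (2 * μ * x) - Real.exp (-x)) = 0 := by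
        have := hsym x hx
        rw [key x hx] at this
        ring_nf
        ring_nf at this
        linarith [this]
      have hexp : Real.exp (2 * μ * x) ≠ Real.exp (-x) := by
        intro h
        have := Real.exp_injective h
        have hx2 : (2 * μ + 1) * x = 0 := by linarith
        rcases mul_eq_zero.mp hx2 with h1 | h1
        · exact hμ (by linarith)
        · exact hx h1
      have hν : ν (-x) = 0 := by
        rcases mul_eq_zero.mp hnx with h | h
        · exact h
        · exact absurd (by linarith : Real.exp (2*μ*x) = Real.exp (-x)) hexp
      rw [key x hx, hν, zero_mul]
  · rintro (hμ | hzero)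
    · intro x hx
      rw [key x hx, hμ]
      rw [mul_comm (Real.exp (-x))]
      congr 1
      ring_nf
    · intro x hx
      rw [hzero x hx, hzero (-x) (neg_ne_zero.mpr hx), mul_zero]
end

section
/- For z < 0 and 0 < α < 1: ∫₀^∞ (e^{zx} − 1) x^{−1−α} dx = Γ(−α)·(−z)^α, where Γ(−α) = −Γ(1−α)/α. -/
/-!
Integrate by parts against `v = x ^ (s + 1)`, `s = -1 - α`: the boundary terms vanish because
`|e^{zx} - 1| ≤ min (-z x) 1`, and what remains is `-z` times the Gamma integral
`∫₀^∞ e^{zx} x^{s+1} dx = Γ(s + 2) (-z)^{-(s+2)}`. Then `Γ(s + 2) = (s + 1) Γ(s + 1)`.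
-/

open MeasureTheory Set Filter Real Topology

namespace Real

theorem abs_exp_sub_one_le_neg {t : ℝ} (ht : t ≤ 0) : |exp t - 1| ≤ -t := by
  rw [abs_of_nonpos (by simpa using ht)]
  linarith [add_one_le_exp t]

theorem abs_exp_sub_one_le_one {t : ℝ} (ht : t ≤ 0) : |exp t - 1| ≤ 1 := by
  rw [abs_of_nonpos (by simpa using ht)]
  linarith [exp_pos t]

theorem Gamma_eq_Gamma_add_one_div {s : ℝ} (hs : s ≠ 0) : Gamma s = Gamma (s + 1) / s := by
  rw [Gamma_add_one hs, mul_div_cancel_left₀ _ hs]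

end Real

section

variable {z s : ℝ}

theorem abs_exp_mul_sub_one_mul_rpow_le_neg_mul (hz : z ≤ 0) {x : ℝ} (hx : 0 < x) :
    |(exp (z * x) - 1) * x ^ s| ≤ -z * x ^ (s + 1) := by
  have hzx : z * x ≤ 0 := mul_nonpos_of_nonpos_of_nonneg hz hx.le
  calc |(exp (z * x) - 1) * x ^ s| = |exp (z * x) - 1| * x ^ s := by
        rw [abs_mul, abs_of_nonneg (rpow_nonneg hx.le s)]
    _ ≤ -(z * x) * x ^ s := by gcongr; exact abs_exp_sub_one_le_neg hzx
    _ = -z * x ^ (s + 1) := by rw [rpow_add_one hx.ne']; ring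

theorem abs_exp_mul_sub_one_mul_rpow_le (hz : z ≤ 0) {x : ℝ} (hx : 0 ≤ x) :
    |(exp (z * x) - 1) * x ^ s| ≤ x ^ s := by
  have hzx : z * x ≤ 0 := mul_nonpos_of_nonpos_of_nonneg hz hx
  calc |(exp (z * x) - 1) * x ^ s| = |exp (z * x) - 1| * x ^ s := by
        rw [abs_mul, abs_of_nonneg (rpow_nonneg hx s)]
    _ ≤ 1 * x ^ s := by gcongr; exact abs_exp_sub_one_le_one hzx
    _ = x ^ s := one_mul _

theorem integrableOn_exp_mul_sub_one_mul_rpow (hz : z ≤ 0) (hs₂ : -2 < s) (hs₁ : s < -1) :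
    IntegrableOn (fun x ↦ (exp (z * x) - 1) * x ^ s) (Ioi 0) := by
  have hcont : ContinuousOn (fun x ↦ (exp (z * x) - 1) * x ^ s) (Ioi 0) := fun x hx ↦
    ((by fun_prop : Continuous fun x ↦ exp (z * x) - 1).continuousAt.mul
      (continuousAt_rpow_const x s (Or.inl (mem_Ioi.1 hx).ne'))).continuousWithinAt
  have hmeas : ∀ t ⊆ Ioi (0 : ℝ), MeasurableSet t →
      AEStronglyMeasurable (fun x ↦ (exp (z * x) - 1) * x ^ s) (volume.restrict t) :=
    fun t ht htm ↦ (hcont.mono ht).aestronglyMeasurable htm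
  have hnear : IntegrableOn (fun x ↦ (exp (z * x) - 1) * x ^ s) (Ioc 0 1) := by
    have hdom : IntegrableOn (fun x : ℝ ↦ -z * x ^ (s + 1)) (Ioc 0 1) :=
      ((intervalIntegral.intervalIntegrable_rpow' (by linarith)).1).const_mul _
    refine hdom.mono' (hmeas _ Ioc_subset_Ioi_self measurableSet_Ioc) ?_
    filter_upwards [ae_restrict_mem measurableSet_Ioc] with x hx
    exact abs_exp_mul_sub_one_mul_rpow_le_neg_mul hz hx.1
  have hfar : IntegrableOn (fun x ↦ (exp (z * x) - 1) * x ^ s) (Ioi 1) := by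
    refine (integrableOn_Ioi_rpow_of_lt hs₁ one_pos).mono'
      (hmeas _ (Ioi_subset_Ioi zero_le_one) measurableSet_Ioi) ?_
    filter_upwards [ae_restrict_mem measurableSet_Ioi] with x hx
    exact abs_exp_mul_sub_one_mul_rpow_le hz (zero_le_one.trans hx.out.le)
  rw [← Ioc_union_Ioi_eq_Ioi zero_le_one]
  exact hnear.union hfar

theorem tendsto_exp_mul_sub_one_mul_rpow_nhdsGT_zero (hz : z ≤ 0) (hs : -1 < s) :
    Tendsto (fun x ↦ (exp (z * x) - 1) * x ^ s) (𝓝[>] 0) (𝓝 0) := by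
  have hdom : Tendsto (fun x : ℝ ↦ -z * x ^ (s + 1)) (𝓝[>] 0) (𝓝 0) := by
    have := ((continuousAt_rpow_const 0 (s + 1) (Or.inr (by linarith))).const_mul (-z)).tendsto
    rw [zero_rpow (by linarith), mul_zero] at this
    exact this.mono_left nhdsWithin_le_nhds
  refine squeeze_zero_norm' ?_ hdom
  filter_upwards [self_mem_nhdsWithin] with x hx
  exact abs_exp_mul_sub_one_mul_rpow_le_neg_mul hz hx

theorem tendsto_exp_mul_sub_one_mul_rpow_atTop (hz : z ≤ 0) (hs : s < 0) :
    Tendsto (fun x ↦ (exp (z * x) - 1) * x ^ s) atTop (𝓝 0) := by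
  have hdom : Tendsto (fun x : ℝ ↦ x ^ s) atTop (𝓝 0) := by
    simpa using tendsto_rpow_neg_atTop (neg_pos.2 hs)
  refine squeeze_zero_norm' ?_ hdom
  filter_upwards [eventually_ge_atTop 0] with x hx
  exact abs_exp_mul_sub_one_mul_rpow_le hz hx

theorem integrableOn_exp_mul_mul_rpow (hz : z < 0) (hs : -1 < s) :
    IntegrableOn (fun x ↦ exp (z * x) * x ^ s) (Ioi 0) := by
  refine (integrableOn_rpow_mul_exp_neg_mul_rpow hs zero_lt_one (neg_pos.2 hz)).congr_fun
    (fun x _ ↦ ?_) measurableSet_Ioi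
  simp only [rpow_one, neg_neg, mul_comm]

theorem integral_exp_mul_mul_rpow (hz : z < 0) (hs : -1 < s) :
    ∫ x in Ioi 0, exp (z * x) * x ^ s = Gamma (s + 1) * (-z) ^ (-(s + 1)) := by
  have h := integral_rpow_mul_exp_neg_mul_Ioi (by linarith : 0 < s + 1) (neg_pos.2 hz)
  rw [add_sub_cancel_right, one_div, inv_rpow (neg_pos.2 hz).le, ← rpow_neg (neg_pos.2 hz).le,
    mul_comm] at h
  rw [← h]
  refine setIntegral_congr_fun measurableSet_Ioi (fun x _ ↦ ?_)
  rw [neg_mul, neg_neg, mul_comm]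

theorem integral_exp_mul_sub_one_mul_rpow (hz : z < 0) (hs₂ : -2 < s) (hs₁ : s < -1) :
    ∫ x in Ioi 0, (exp (z * x) - 1) * x ^ s = Gamma (s + 1) * (-z) ^ (-(s + 1)) := by
  have hu : ∀ x ∈ Ioi (0 : ℝ), HasDerivAt (fun x ↦ exp (z * x) - 1) (exp (z * x) * z) x :=
    fun x _ ↦ by simpa using ((hasDerivAt_id x).const_mul z).exp.sub_const 1
  have hv : ∀ x ∈ Ioi (0 : ℝ), HasDerivAt (fun x ↦ x ^ (s + 1)) ((s + 1) * x ^ s) x :=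
    fun x hx ↦ by simpa using hasDerivAt_rpow_const (p := s + 1) (Or.inl (mem_Ioi.1 hx).ne')
  have huv' : IntegrableOn (fun x ↦ (exp (z * x) - 1) * ((s + 1) * x ^ s)) (Ioi 0) :=
    IntegrableOn.congr_fun ((integrableOn_exp_mul_sub_one_mul_rpow hz.le hs₂ hs₁).const_mul
      (s + 1)) (fun x _ ↦ by ring) measurableSet_Ioi
  have hu'v : IntegrableOn (fun x ↦ exp (z * x) * z * x ^ (s + 1)) (Ioi 0) :=
    IntegrableOn.congr_fun
      ((integrableOn_exp_mul_mul_rpow hz (s := s + 1) (by linarith)).const_mul z)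
      (fun x _ ↦ by ring) measurableSet_Ioi
  have hmain : (s + 1) * ∫ x in Ioi 0, (exp (z * x) - 1) * x ^ s =
      -z * ∫ x in Ioi 0, exp (z * x) * x ^ (s + 1) := by
    calc (s + 1) * ∫ x in Ioi 0, (exp (z * x) - 1) * x ^ s
        = ∫ x in Ioi 0, (exp (z * x) - 1) * ((s + 1) * x ^ s) := by
          rw [← integral_const_mul]
          exact setIntegral_congr_fun measurableSet_Ioi fun x _ ↦ by ring
      _ = 0 - 0 - ∫ x in Ioi 0, exp (z * x) * z * x ^ (s + 1) :=
          integral_Ioi_mul_deriv_eq_deriv_mul hu hv huv' hu'v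
            (tendsto_exp_mul_sub_one_mul_rpow_nhdsGT_zero hz.le (by linarith))
            (tendsto_exp_mul_sub_one_mul_rpow_atTop hz.le (by linarith))
      _ = -z * ∫ x in Ioi 0, exp (z * x) * x ^ (s + 1) := by
          rw [sub_self, zero_sub, neg_mul, ← integral_const_mul]
          exact congrArg Neg.neg (setIntegral_congr_fun measurableSet_Ioi fun x _ ↦ by ring)
  have hc : 0 < -z := neg_pos.2 hz
  have hs : s + 1 ≠ 0 := by linarith
  have hz₀ : z ≠ 0 := hz.ne
  rw [integral_exp_mul_mul_rpow hz (by linarith), Gamma_add_one hs,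
    show -(s + 1 + 1) = -(s + 1) - 1 by ring, rpow_sub_one hc.ne'] at hmain
  apply mul_left_cancel₀ hs
  rw [hmain]
  field_simp

end

/-- Core analytic identity for the stable subordinator:
∫₀^∞ (e^{zx} - 1) x^{-1-α} dx = Γ(-α)(-z)^α, with Γ(-α) = -Γ(1-α)/α. -/
theorem stable_integral_identity (α z : ℝ) (hα : 0 < α) (hα1 : α < 1) (hz : z < 0) :
    ∫ x in Set.Ioi (0 : ℝ), (Real.exp (z * x) - 1) * x ^ (-1 - α) =
      Real.Gamma (-α) * (-z) ^ α ∧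
    Real.Gamma (-α) = -Real.Gamma (1 - α) / α := by
  constructor
  · rw [integral_exp_mul_sub_one_mul_rpow hz (by linarith) (by linarith),
      show -1 - α + 1 = -α by ring, neg_neg]
  · rw [Gamma_eq_Gamma_add_one_div (neg_ne_zero.2 hα.ne'), neg_add_eq_sub, div_neg,
      neg_div]
end
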